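/- With Q := Σ_{n≥1} λⁿ P_(n) : B[[λ]] → A[[λ]], T_± := id_{B[[λ]]} + Δ_± ∘ Q and T_±^{-1} := id_{B[[λ]]} − Δ_⋆± ∘ Q, the following operator identities hold on B[[λ]]: (i) P ∘ T_± = P_⋆; (ii) the geometric series Σ_{m≥0} (−Δ_± ∘ Q)^m (well-defined since Δ_± ∘ Q has vanishing λ⁰-coefficient) equals id_{B[[λ]]} − Δ_⋆± ∘ Q, so T_± ∘ T_±^{-1} = T_±^{-1} ∘ T_± = id_{B[[λ]]}; (iii) P_⋆ ∘ T_±^{-1} = P. -/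

import Mathlib

open Finset

noncomputable section

namespace NCQFT

theorem sum_ad_assoc {M : Type*} [AddCommMonoid M] (n : ℕ) (G : ℕ → ℕ → ℕ → M) :
    ∑ p ∈ antidiagonal n, ∑ q ∈ antidiagonal p.2, G p.1 q.1 q.2
      = ∑ p ∈ antidiagonal n, ∑ q ∈ antidiagonal p.1, G q.1 q.2 p.2 := by
  rw [Finset.sum_sigma', Finset.sum_sigma']
  refine Finset.sum_nbij' (fun x => ⟨(x.1.1 + x.2.1, x.2.2), (x.1.1, x.2.1)⟩)
    (fun x => ⟨(x.2.1, x.2.2 + x.1.2), (x.2.2, x.1.2)⟩) ?_ ?_ ?_ ?_ ?_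
  · rintro ⟨⟨a, k⟩, b, c⟩ h
    simp only [Finset.mem_sigma, Finset.HasAntidiagonal.mem_antidiagonal] at h ⊢
    refine ⟨by omega, ?_⟩
    try trivial
    try omega
  · rintro ⟨⟨i, c⟩, a, b⟩ h
    simp only [Finset.mem_sigma, Finset.HasAntidiagonal.mem_antidiagonal] at h ⊢
    refine ⟨by omega, ?_⟩
    try trivial
    try omega
  · rintro ⟨⟨a, k⟩, b, c⟩ h
    simp only [Finset.mem_sigma, Finset.HasAntidiagonal.mem_antidiagonal] at h
    obtain ⟨-, h2⟩ := h
    subst h2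
    rfl
  · rintro ⟨⟨i, c⟩, a, b⟩ h
    simp only [Finset.mem_sigma, Finset.HasAntidiagonal.mem_antidiagonal] at h
    obtain ⟨-, h2⟩ := h
    subst h2
    rfl
  · rintro ⟨⟨a, k⟩, b, c⟩ h
    rfl

theorem sum_ad_swap {M : Type*} [AddCommMonoid M] (n : ℕ) (G : ℕ → ℕ → ℕ → M) :
    ∑ p ∈ antidiagonal n, ∑ q ∈ antidiagonal p.2, G p.1 q.1 q.2
      = ∑ p ∈ antidiagonal n, ∑ q ∈ antidiagonal p.2, G q.1 p.1 q.2 := by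
  rw [Finset.sum_sigma', Finset.sum_sigma']
  refine Finset.sum_nbij' (fun x => ⟨(x.2.1, x.1.1 + x.2.2), (x.1.1, x.2.2)⟩)
    (fun x => ⟨(x.2.1, x.1.1 + x.2.2), (x.1.1, x.2.2)⟩) ?_ ?_ ?_ ?_ ?_
  · rintro ⟨⟨a, k⟩, b, c⟩ h
    simp only [Finset.mem_sigma, Finset.HasAntidiagonal.mem_antidiagonal] at h ⊢
    refine ⟨by omega, ?_⟩
    try trivial
    try omega
  · rintro ⟨⟨b, k⟩, a, c⟩ h
    simp only [Finset.mem_sigma, Finset.HasAntidiagonal.mem_antidiagonal] at h ⊢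
    refine ⟨by omega, ?_⟩
    try trivial
    try omega
  · rintro ⟨⟨a, k⟩, b, c⟩ h
    simp only [Finset.mem_sigma, Finset.HasAntidiagonal.mem_antidiagonal] at h
    obtain ⟨-, h2⟩ := h
    subst h2
    rfl
  · rintro ⟨⟨b, k⟩, a, c⟩ h
    simp only [Finset.mem_sigma, Finset.HasAntidiagonal.mem_antidiagonal] at h
    obtain ⟨-, h2⟩ := h
    subst h2
    rfl
  · rintro ⟨⟨a, k⟩, b, c⟩ h
    rfl

variable {K : Type*} [CommRing K]

/-- The Cauchy-product scalar multiplication of `K[[λ]]` on `V[[λ]] = (ℕ → V)`. -/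
def fpsSMul {V : Type*} [AddCommGroup V] [Module K V] (c : PowerSeries K) (v : ℕ → V) :
    ℕ → V :=
  fun n => ∑ p ∈ antidiagonal n, PowerSeries.coeff p.1 c • v p.2

theorem fpsSMul_one {V : Type*} [AddCommGroup V] [Module K V] (v : ℕ → V) :
    fpsSMul (1 : PowerSeries K) v = v := by
  funext n
  rw [fpsSMul, Finset.sum_eq_single (0, n)]
  · simp
  · rintro ⟨i, j⟩ hmem hne
    rw [PowerSeries.coeff_one, if_neg, zero_smul]
    rintro rfl
    apply hne
    simp only [Finset.HasAntidiagonal.mem_antidiagonal] at hmem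
    simp [← hmem]
  · intro h
    exact absurd (by simp) h

theorem fpsSMul_mul {V : Type*} [AddCommGroup V] [Module K V] (c d : PowerSeries K)
    (v : ℕ → V) : fpsSMul (c * d) v = fpsSMul c (fpsSMul d v) := by
  funext n
  rw [fpsSMul]
  calc ∑ p ∈ antidiagonal n, PowerSeries.coeff p.1 (c * d) • v p.2
      = ∑ p ∈ antidiagonal n, ∑ q ∈ antidiagonal p.1,
          (PowerSeries.coeff q.1 c * PowerSeries.coeff q.2 d) • v p.2 := by
        refine Finset.sum_congr rfl fun p _ => ?_
        rw [PowerSeries.coeff_mul, Finset.sum_smul]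
    _ = ∑ p ∈ antidiagonal n, ∑ q ∈ antidiagonal p.2,
          (PowerSeries.coeff p.1 c * PowerSeries.coeff q.1 d) • v q.2 :=
        (sum_ad_assoc n fun a b e => (PowerSeries.coeff a c * PowerSeries.coeff b d) • v e).symm
    _ = fpsSMul c (fpsSMul d v) n := by
        rw [fpsSMul]
        refine Finset.sum_congr rfl fun p _ => ?_
        rw [fpsSMul, Finset.smul_sum]
        exact Finset.sum_congr rfl fun q _ => (mul_smul _ _ _)

instance fpsModule {V : Type*} [AddCommGroup V] [Module K V] :
    Module (PowerSeries K) (ℕ → V) where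
  smul := fpsSMul
  one_smul := fpsSMul_one
  mul_smul := fpsSMul_mul
  smul_zero c := by
    funext n
    show fpsSMul c (0 : ℕ → V) n = 0
    simp [fpsSMul]
  smul_add c u v := by
    funext n
    show fpsSMul c (u + v) n = fpsSMul c u n + fpsSMul c v n
    simp [fpsSMul, Finset.sum_add_distrib, smul_add]
  add_smul c d v := by
    funext n
    show fpsSMul (c + d) v n = fpsSMul c v n + fpsSMul d v n
    simp [fpsSMul, Finset.sum_add_distrib, add_smul]
  zero_smul v := by
    funext n
    show fpsSMul (0 : PowerSeries K) v n = 0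
    simp [fpsSMul]

theorem fps_smul_apply {V : Type*} [AddCommGroup V] [Module K V]
    (c : PowerSeries K) (v : ℕ → V) (n : ℕ) :
    (c • v) n = ∑ p ∈ antidiagonal n, PowerSeries.coeff p.1 c • v p.2 := rfl

/-- The `K[[λ]]`-linear map `V[[λ]] → W[[λ]]` induced by a family of `K`-linear maps,
`F_⋆ = Σ λⁿ F_(n)`. -/
def starMap {V W : Type*} [AddCommGroup V] [Module K V] [AddCommGroup W] [Module K W]
    (F : ℕ → V →ₗ[K] W) : (ℕ → V) →ₗ[PowerSeries K] (ℕ → W) where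
  toFun u := fun n => ∑ p ∈ antidiagonal n, F p.1 (u p.2)
  map_add' u v := by
    funext n
    simp [Finset.sum_add_distrib]
  map_smul' c u := by
    funext n
    show ∑ p ∈ antidiagonal n, F p.1 ((c • u) p.2)
        = (c • fun m => ∑ q ∈ antidiagonal m, F q.1 (u q.2)) n
    simp only [fps_smul_apply, map_sum, map_smul, Finset.smul_sum]
    exact sum_ad_swap n fun a b e => PowerSeries.coeff b c • F a (u e)

theorem starMap_apply {V W : Type*} [AddCommGroup V] [Module K V] [AddCommGroup W] [Module K W]
    (F : ℕ → V →ₗ[K] W) (u : ℕ → V) (n : ℕ) :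
    starMap F u n = ∑ p ∈ antidiagonal n, F p.1 (u p.2) := rfl

/-- The coefficientwise application of a single `K`-linear map, as a `K[[λ]]`-linear map. -/
def cwMap {V W : Type*} [AddCommGroup V] [Module K V] [AddCommGroup W] [Module K W]
    (F : V →ₗ[K] W) : (ℕ → V) →ₗ[PowerSeries K] (ℕ → W) where
  toFun u := fun n => F (u n)
  map_add' u v := by funext n; simp
  map_smul' c u := by
    funext n
    show F ((c • u) n) = (c • fun m => F (u m)) n
    simp only [fps_smul_apply, map_sum, map_smul]

theorem cwMap_apply {V W : Type*} [AddCommGroup V] [Module K V] [AddCommGroup W] [Module K W]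
    (F : V →ₗ[K] W) (u : ℕ → V) (n : ℕ) : cwMap F u n = F (u n) := rfl


variable {B : Type*} [AddCommGroup B] [Module ℝ B]

/-- `chain D Pn [j₁, …, j_k] = D ∘ P_(j₁) ∘ D ∘ P_(j₂) ∘ ⋯ ∘ D ∘ P_(j_k) ∘ D`. -/
def chain (D : B →ₗ[ℝ] B) (Pn : ℕ → B →ₗ[ℝ] B) : List ℕ → (B →ₗ[ℝ] B)
  | [] => D
  | j :: t => D ∘ₗ Pn j ∘ₗ chain D Pn t

/-- The `n`-th coefficient `Δ_(n)±` of the deformed Green's operator: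
`Δ_(n)± = Σ_{k=1}^{n} Σ_{j₁+⋯+j_k = n, jᵢ ≥ 1} (−1)^k Δ_± ∘ P_(j₁) ∘ Δ_± ∘ ⋯ ∘ Δ_± ∘ P_(j_k) ∘ Δ_±`,
realized as a sum over all compositions `(j₁, …, j_k)` of `n` (for `n = 0` it equals `Δ_±`). -/
def dGreen (D : B →ₗ[ℝ] B) (Pn : ℕ → B →ₗ[ℝ] B) (n : ℕ) : B →ₗ[ℝ] B :=
  ∑ c : Composition n, ((-1 : ℝ) ^ c.blocks.length) • chain D Pn c.blocks

/-- The family `Q_(n)` of `Q := Σ_{n ≥ 1} λⁿ P_(n)` (the `λ⁰`-coefficient is dropped). -/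
def posPart (Pn : ℕ → B →ₗ[ℝ] B) : ℕ → B →ₗ[ℝ] B :=
  fun n => if n = 0 then 0 else Pn n

/-- The `ℝ[[λ]]`-bilinear extension of a bilinear form `β : B × B → ℝ` to `B[[λ]]`. -/
def betaSeries (β : B →ₗ[ℝ] B →ₗ[ℝ] ℝ) (u v : ℕ → B) : PowerSeries ℝ :=
  PowerSeries.mk fun n => ∑ p ∈ antidiagonal n, β (u p.1) (v p.2)

/-- The family `P_(n)`, restricted to maps `A → A`
(using `P(A) ⊆ A` and `P_(n)(B) ⊆ A` for `n ≥ 1`). -/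
def restA (A : Submodule ℝ B) (Pn : ℕ → B →ₗ[ℝ] B) (hPA : ∀ a ∈ A, Pn 0 a ∈ A)
    (hPpos : ∀ n, 0 < n → ∀ u : B, Pn n u ∈ A) (n : ℕ) : ↥A →ₗ[ℝ] ↥A :=
  (Pn n).restrict (p := A) (q := A) (fun x hx => by
    rcases Nat.eq_zero_or_pos n with h | h
    · exact h ▸ hPA x hx
    · exact hPpos n h x)


theorem dGreen_zero (D : B →ₗ[ℝ] B) (Pn : ℕ → B →ₗ[ℝ] B) : dGreen D Pn 0 = D := by
  have hu : ∀ c : Composition 0, c = ⟨[], by simp, rfl⟩ := by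
    intro c
    ext1
    have := c.blocks_sum
    cases hb : c.blocks with
    | nil => rfl
    | cons a t =>
      exfalso
      have ha : 0 < a := c.blocks_pos (by rw [hb]; exact List.mem_cons_self)
      rw [hb] at this
      simp [List.sum_cons] at this
      omega
  have : (Finset.univ : Finset (Composition 0)) = {⟨[], by simp, rfl⟩} := by
    ext c
    simp [hu c]
  rw [dGreen, this, Finset.sum_singleton]
  simp [chain]

theorem blocks_ne_nil {n : ℕ} (c : Composition (n + 1)) : c.blocks ≠ [] := by
  intro h
  have := c.blocks_sum
  rw [h] at this
  simp at this

theorem head_tail {n : ℕ} (c : Composition (n + 1)) :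
    0 < c.blocks.headI ∧ c.blocks.headI + c.blocks.tail.sum = n + 1 ∧
      c.blocks.headI :: c.blocks.tail = c.blocks := by
  have h := c.blocks_sum
  cases hb : c.blocks with
  | nil => exact absurd hb (blocks_ne_nil c)
  | cons a t =>
    rw [hb] at h
    simp only [List.sum_cons] at h
    have ha : 0 < a := c.blocks_pos (by rw [hb]; exact List.mem_cons_self)
    simp only [hb, List.headI, List.tail]
    exact ⟨ha, h, trivial⟩

theorem tail_sum {n : ℕ} (c : Composition (n + 1)) :
    c.blocks.tail.sum = n + 1 - c.blocks.headI := by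
  have := (head_tail c).2.1
  omega

theorem dGreen_succ (D : B →ₗ[ℝ] B) (Pn : ℕ → B →ₗ[ℝ] B) (n : ℕ) :
    dGreen D Pn (n + 1)
      = - ∑ p ∈ antidiagonal (n + 1), (D ∘ₗ posPart Pn p.1) ∘ₗ dGreen D Pn p.2 := by
  apply LinearMap.ext; intro x
  simp only [LinearMap.neg_apply, LinearMap.coe_sum, Finset.sum_apply, LinearMap.comp_apply,
    dGreen, LinearMap.smul_apply, map_sum, map_smul, Finset.smul_sum]
  rw [← Finset.sum_neg_distrib]
  rw [show ∑ p ∈ antidiagonal (n+1), -∑ c : Composition p.2,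
        (-1:ℝ)^c.blocks.length • D (posPart Pn p.1 (chain D Pn c.blocks x))
      = ∑ p ∈ (antidiagonal (n+1)).filter (fun p => p.1 ≠ 0), -∑ c : Composition p.2,
        (-1:ℝ)^c.blocks.length • D (posPart Pn p.1 (chain D Pn c.blocks x)) from
    (Finset.sum_subset (Finset.filter_subset _ _) (by
      intro p hp hnp
      simp only [Finset.mem_filter, not_and, Decidable.not_not] at hnp
      simp [posPart, hnp hp])).symm]
  simp only [← Finset.sum_neg_distrib]
  rw [Finset.sum_sigma']
  refine Finset.sum_bij'
    (i := fun (c : Composition (n+1)) (_ : c ∈ Finset.univ) =>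
      (⟨(c.blocks.headI, n + 1 - c.blocks.headI),
        ⟨c.blocks.tail, fun hi => c.blocks_pos (List.mem_of_mem_tail hi), tail_sum c⟩⟩ :
        Σ p : ℕ × ℕ, Composition p.2))
    (j := fun x hx => ⟨x.1.1 :: x.2.blocks, ?_, ?_⟩)
    ?_ (fun _ _ => Finset.mem_univ _) ?_ ?_ ?_
  · -- blocks_pos for j
    intro i hi
    simp only [Finset.mem_sigma, Finset.mem_filter, Finset.HasAntidiagonal.mem_antidiagonal] at hx
    rcases List.mem_cons.mp hi with h | h
    · subst h; omega
    · exact x.2.blocks_pos h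
  · -- blocks_sum for j
    simp only [Finset.mem_sigma, Finset.mem_filter, Finset.HasAntidiagonal.mem_antidiagonal] at hx
    rw [List.sum_cons, x.2.blocks_sum]
    omega
  · -- hi : i c ∈ sigma set
    intro c _
    simp only [Finset.mem_sigma, Finset.mem_filter, Finset.HasAntidiagonal.mem_antidiagonal, Finset.mem_univ,
      and_true]
    have h := head_tail c
    exact ⟨by omega, by omega⟩
  · -- left_inv : j (i c) = c
    intro c _
    ext1
    show c.blocks.headI :: c.blocks.tail = c.blocks
    exact (head_tail c).2.2
  · -- right_inv : i (j a) = a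
    rintro ⟨⟨j1, a⟩, c⟩ ha
    simp only [Finset.mem_sigma, Finset.mem_filter, Finset.HasAntidiagonal.mem_antidiagonal] at ha
    obtain ⟨⟨hsum, hne⟩, -⟩ := ha
    have ha' : a = n + 1 - j1 := by omega
    subst ha'
    show (⟨(j1, n + 1 - j1), ⟨_, _, _⟩⟩ : Σ p : ℕ × ℕ, Composition p.2) = _
    congr 1
  · -- values
    intro c _
    have hne := blocks_ne_nil c
    dsimp only
    cases hb : c.blocks with
    | nil => exact absurd hb hne
    | cons a t =>
      simp only [hb, List.length_cons, pow_succ, chain]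
      have hapos : a ≠ 0 := by
        have := c.blocks_pos (by rw [hb]; exact List.mem_cons_self)
        omega
      simp only [hb, List.headI, List.tail, posPart, if_neg hapos, LinearMap.comp_apply]
      rw [mul_neg_one, neg_smul]
      simp [hapos]

theorem R_apply (D : B →ₗ[ℝ] B) (Pn : ℕ → B →ₗ[ℝ] B) (u : ℕ → B) (n : ℕ) :
    (cwMap D ∘ₗ starMap (posPart Pn) : (ℕ → B) →ₗ[PowerSeries ℝ] (ℕ → B)) u n
      = ∑ p ∈ antidiagonal n, D (posPart Pn p.1 (u p.2)) := by
  simp [LinearMap.comp_apply, cwMap_apply, starMap_apply, map_sum]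

theorem negR_pow_vanish (D : B →ₗ[ℝ] B) (Pn : ℕ → B →ₗ[ℝ] B) :
    ∀ m (u : ℕ → B) n, n < m →
      (((-(cwMap D ∘ₗ starMap (posPart Pn)) : Module.End (PowerSeries ℝ) (ℕ → B)) ^ m) u) n
        = 0 := by
  intro m
  induction m with
  | zero => intro u n h; omega
  | succ m IH =>
    intro u n h
    rw [pow_succ', Module.End.mul_apply, LinearMap.neg_apply]
    have : (-((cwMap D ∘ₗ starMap (posPart Pn) : (ℕ → B) →ₗ[PowerSeries ℝ] (ℕ → B))
        (((-(cwMap D ∘ₗ starMap (posPart Pn)) : Module.End (PowerSeries ℝ) (ℕ → B)) ^ m) u))) n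
        = -(((cwMap D ∘ₗ starMap (posPart Pn) : (ℕ → B) →ₗ[PowerSeries ℝ] (ℕ → B))
        (((-(cwMap D ∘ₗ starMap (posPart Pn)) : Module.End (PowerSeries ℝ) (ℕ → B)) ^ m) u)) n) :=
      rfl
    rw [this, R_apply, neg_eq_zero]
    refine Finset.sum_eq_zero fun p hp => ?_
    by_cases h0 : p.1 = 0
    · simp [posPart, h0]
    · rw [Finset.HasAntidiagonal.mem_antidiagonal] at hp
      rw [IH u p.2 (by omega), map_zero, map_zero]

theorem Egreen_apply (D : B →ₗ[ℝ] B) (Pn : ℕ → B →ₗ[ℝ] B) (u : ℕ → B) (n : ℕ) :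
    starMap (dGreen D Pn) (starMap (posPart Pn) u) n
      = ∑ p ∈ antidiagonal n, dGreen D Pn p.1 (starMap (posPart Pn) u p.2) := rfl

theorem key_sum (D : B →ₗ[ℝ] B) (Pn : ℕ → B →ₗ[ℝ] B) (u : ℕ → B) (n : ℕ) :
    starMap (dGreen D Pn) (starMap (posPart Pn) u) (n + 1)
      = ∑ p ∈ antidiagonal (n + 1), D (posPart Pn p.1 (u p.2))
        - ∑ p ∈ antidiagonal (n + 1),
            D (posPart Pn p.1 (starMap (dGreen D Pn) (starMap (posPart Pn) u) p.2)) := by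
  set w := starMap (posPart Pn) u with hw
  rw [Egreen_apply]
  have split : ∀ p ∈ antidiagonal (n + 1), dGreen D Pn p.1 (w p.2)
      = (if p.1 = 0 then D (w p.2) else 0)
        + (if p.1 = 0 then 0 else dGreen D Pn p.1 (w p.2)) := by
    intro p _
    by_cases h : p.1 = 0
    · simp [h, dGreen_zero]
    · simp [h]
  rw [Finset.sum_congr rfl split, Finset.sum_add_distrib]
  have h1 : ∑ p ∈ antidiagonal (n + 1), (if p.1 = 0 then D (w p.2) else 0)
      = ∑ p ∈ antidiagonal (n + 1), D (posPart Pn p.1 (u p.2)) := by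
    rw [Finset.sum_eq_single_of_mem ((0 : ℕ), n + 1) (by simp)]
    · rw [if_pos rfl]
      show D (w (n + 1)) = _
      rw [hw, starMap_apply, map_sum]
    · rintro ⟨a, b⟩ hab hne
      rw [Finset.HasAntidiagonal.mem_antidiagonal] at hab
      rw [if_neg]
      intro h0
      exact hne (by simp at h0 ⊢; omega)
  have h2 : ∑ p ∈ antidiagonal (n + 1), (if p.1 = 0 then 0 else dGreen D Pn p.1 (w p.2))
      = - ∑ p ∈ antidiagonal (n + 1),
            D (posPart Pn p.1 (starMap (dGreen D Pn) w p.2)) := by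
    have step : ∀ p ∈ antidiagonal (n + 1),
        (if p.1 = 0 then 0 else dGreen D Pn p.1 (w p.2))
          = - ∑ q ∈ antidiagonal p.1, D (posPart Pn q.1 (dGreen D Pn q.2 (w p.2))) := by
      intro p _
      match hp : p.1 with
      | 0 => simp [posPart]
      | Nat.succ k =>
        rw [if_neg (by omega), dGreen_succ]
        simp [Finset.sum_neg_distrib]
    rw [Finset.sum_congr rfl step, Finset.sum_neg_distrib, neg_inj]
    rw [← sum_ad_assoc (n + 1) (fun j c b => D (posPart Pn j (dGreen D Pn c (w b))))]
    refine Finset.sum_congr rfl fun p _ => ?_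
    rw [Egreen_apply, map_sum, map_sum]
  rw [h1, h2, sub_eq_add_neg]

theorem geom_aux (D : B →ₗ[ℝ] B) (Pn : ℕ → B →ₗ[ℝ] B) :
    ∀ n (u : ℕ → B), (∑ m ∈ Finset.range (n + 1),
        (((-(cwMap D ∘ₗ starMap (posPart Pn)) : Module.End (PowerSeries ℝ) (ℕ → B)) ^ m) u) n)
      = u n - starMap (dGreen D Pn) (starMap (posPart Pn) u) n := by
  intro n
  induction n using Nat.strong_induction_on with
  | _ n IH =>
    intro u
    match n with
    | 0 =>
      simp [Egreen_apply, starMap_apply, posPart]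
    | Nat.succ n =>
      rw [Finset.sum_range_succ']
      have h0 : (((-(cwMap D ∘ₗ starMap (posPart Pn)) :
          Module.End (PowerSeries ℝ) (ℕ → B)) ^ 0) u) (n + 1) = u (n + 1) := by
        rw [pow_zero]; rfl
      rw [h0]
      have hstep : ∀ i, (((-(cwMap D ∘ₗ starMap (posPart Pn)) :
            Module.End (PowerSeries ℝ) (ℕ → B)) ^ (i + 1)) u) (n + 1)
          = - ∑ p ∈ antidiagonal (n + 1),
              D (posPart Pn p.1
                ((((-(cwMap D ∘ₗ starMap (posPart Pn)) :
                  Module.End (PowerSeries ℝ) (ℕ → B)) ^ i) u) p.2)) := by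
        intro i
        rw [pow_succ', Module.End.mul_apply, LinearMap.neg_apply, Pi.neg_apply, R_apply]
      simp only [hstep]
      rw [Finset.sum_neg_distrib, Finset.sum_comm]
      have hcol : ∀ p ∈ antidiagonal (n + 1),
          (∑ i ∈ Finset.range (n + 1), D (posPart Pn p.1
              ((((-(cwMap D ∘ₗ starMap (posPart Pn)) :
                Module.End (PowerSeries ℝ) (ℕ → B)) ^ i) u) p.2)))
          = D (posPart Pn p.1 (u p.2 - starMap (dGreen D Pn) (starMap (posPart Pn) u) p.2)) := by
        intro p hp
        rw [Finset.HasAntidiagonal.mem_antidiagonal] at hp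
        rw [← map_sum, ← map_sum]
        by_cases h0 : p.1 = 0
        · simp [posPart, h0]
        · congr 1
          congr 1
          have hle : p.2 + 1 ≤ n + 1 := by omega
          rw [← Finset.sum_subset (Finset.range_subset_range.mpr hle)
            (fun m _ hm => negR_pow_vanish D Pn m u p.2 (by
              simp only [Finset.mem_range, not_lt] at hm ⊢; omega))]
          exact IH p.2 (by omega) u
      rw [Finset.sum_congr rfl hcol]
      simp only [map_sub]
      rw [key_sum]
      simp only [Finset.sum_sub_distrib]
      abel

theorem part_i (A : Submodule ℝ B) (Pn : ℕ → B →ₗ[ℝ] B)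
    (hPpos : ∀ n, 0 < n → ∀ u : B, Pn n u ∈ A)
    (D : B →ₗ[ℝ] B) (hPD : ∀ a ∈ A, Pn 0 (D a) = a) :
    cwMap (Pn 0) ∘ₗ (LinearMap.id + cwMap D ∘ₗ starMap (posPart Pn)) = starMap Pn := by
  apply LinearMap.ext; intro u; funext n
  show Pn 0 (((LinearMap.id + cwMap D ∘ₗ starMap (posPart Pn) :
      (ℕ → B) →ₗ[PowerSeries ℝ] (ℕ → B)) u) n) = starMap Pn u n
  simp only [LinearMap.add_apply, LinearMap.id_apply, Pi.add_apply, map_add, R_apply,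
    starMap_apply]
  have hmem : (∑ p ∈ antidiagonal n, D (posPart Pn p.1 (u p.2))) = D (∑ p ∈ antidiagonal n,
      posPart Pn p.1 (u p.2)) := (map_sum D _ _).symm
  rw [hmem, hPD _ (Submodule.sum_mem A (fun p _ => by
    by_cases h : p.1 = 0
    · simp [posPart, h]
    · simpa [posPart, h] using hPpos p.1 (Nat.pos_of_ne_zero h) (u p.2)))]
  have split : ∀ p ∈ antidiagonal n, Pn p.1 (u p.2)
      = (if p.1 = 0 then Pn 0 (u p.2) else 0) + posPart Pn p.1 (u p.2) := by
    intro p _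
    by_cases h : p.1 = 0
    · simp [posPart, h]
    · simp [posPart, h]
  rw [Finset.sum_congr rfl split, Finset.sum_add_distrib]
  congr 1
  rw [Finset.sum_eq_single_of_mem ((0 : ℕ), n) (by simp)]
  · rw [if_pos rfl]
  · rintro ⟨a, b⟩ hab hne
    rw [Finset.HasAntidiagonal.mem_antidiagonal] at hab
    rw [if_neg]
    intro h0
    exact hne (by simp at h0 ⊢; omega)

theorem Tinv_eq (D : B →ₗ[ℝ] B) (Pn : ℕ → B →ₗ[ℝ] B) (u : ℕ → B) (n : ℕ) :
    ((LinearMap.id - starMap (dGreen D Pn) ∘ₗ starMap (posPart Pn) :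
        (ℕ → B) →ₗ[PowerSeries ℝ] (ℕ → B)) u) n
      = u n - starMap (dGreen D Pn) (starMap (posPart Pn) u) n := rfl

theorem T_congr (D : B →ₗ[ℝ] B) (Pn : ℕ → B →ₗ[ℝ] B) (v w : ℕ → B) (n : ℕ)
    (h : ∀ k, k ≤ n → v k = w k) :
    ((LinearMap.id + cwMap D ∘ₗ starMap (posPart Pn) :
        (ℕ → B) →ₗ[PowerSeries ℝ] (ℕ → B)) v) n
      = ((LinearMap.id + cwMap D ∘ₗ starMap (posPart Pn) :
        (ℕ → B) →ₗ[PowerSeries ℝ] (ℕ → B)) w) n := by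
  simp only [LinearMap.add_apply, LinearMap.id_apply, Pi.add_apply, R_apply]
  rw [h n le_rfl]
  congr 1
  refine Finset.sum_congr rfl fun p hp => ?_
  rw [Finset.HasAntidiagonal.mem_antidiagonal] at hp
  rw [h p.2 (by omega)]

theorem Tinv_agree (D : B →ₗ[ℝ] B) (Pn : ℕ → B →ₗ[ℝ] B) (u : ℕ → B) (N k : ℕ) (hk : k < N) :
    ((LinearMap.id - starMap (dGreen D Pn) ∘ₗ starMap (posPart Pn) :
        (ℕ → B) →ₗ[PowerSeries ℝ] (ℕ → B)) u) k
      = ((∑ m ∈ Finset.range N,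
          (-(cwMap D ∘ₗ starMap (posPart Pn)) : Module.End (PowerSeries ℝ) (ℕ → B)) ^ m) u) k := by
  rw [Tinv_eq, ← geom_aux D Pn k u, LinearMap.sum_apply, Finset.sum_apply]
  exact Finset.sum_subset (Finset.range_subset_range.mpr (by omega))
    (fun m _ hm => negR_pow_vanish D Pn m u k (by
      simp only [Finset.mem_range, not_lt] at hm; omega))

theorem T_as_ring (D : B →ₗ[ℝ] B) (Pn : ℕ → B →ₗ[ℝ] B) :
    (LinearMap.id + cwMap D ∘ₗ starMap (posPart Pn) : Module.End (PowerSeries ℝ) (ℕ → B))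
      = 1 - (-(cwMap D ∘ₗ starMap (posPart Pn))) := by
  rw [sub_neg_eq_add]; rfl

theorem TTinv (D : B →ₗ[ℝ] B) (Pn : ℕ → B →ₗ[ℝ] B) :
    (LinearMap.id + cwMap D ∘ₗ starMap (posPart Pn))
      ∘ₗ (LinearMap.id - starMap (dGreen D Pn) ∘ₗ starMap (posPart Pn))
      = (LinearMap.id : (ℕ → B) →ₗ[PowerSeries ℝ] (ℕ → B)) := by
  apply LinearMap.ext; intro u; funext n
  rw [LinearMap.comp_apply, LinearMap.id_apply]
  rw [T_congr D Pn _ _ n (fun k hk => Tinv_agree D Pn u (n + 2) k (by omega))]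
  rw [show ((LinearMap.id + cwMap D ∘ₗ starMap (posPart Pn) :
      (ℕ → B) →ₗ[PowerSeries ℝ] (ℕ → B))
      ((∑ m ∈ Finset.range (n + 2),
        (-(cwMap D ∘ₗ starMap (posPart Pn)) : Module.End (PowerSeries ℝ) (ℕ → B)) ^ m) u))
    = (((LinearMap.id + cwMap D ∘ₗ starMap (posPart Pn) :
        Module.End (PowerSeries ℝ) (ℕ → B))
        * ∑ m ∈ Finset.range (n + 2),
          (-(cwMap D ∘ₗ starMap (posPart Pn)) : Module.End (PowerSeries ℝ) (ℕ → B)) ^ m) u)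
    from rfl]
  rw [T_as_ring, mul_neg_geom_sum]
  rw [LinearMap.sub_apply, Module.End.one_apply, Pi.sub_apply,
    negR_pow_vanish D Pn (n + 2) u n (by omega), sub_zero]

theorem TinvT (D : B →ₗ[ℝ] B) (Pn : ℕ → B →ₗ[ℝ] B) :
    (LinearMap.id - starMap (dGreen D Pn) ∘ₗ starMap (posPart Pn))
      ∘ₗ (LinearMap.id + cwMap D ∘ₗ starMap (posPart Pn))
      = (LinearMap.id : (ℕ → B) →ₗ[PowerSeries ℝ] (ℕ → B)) := by
  apply LinearMap.ext; intro u; funext n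
  rw [LinearMap.comp_apply, LinearMap.id_apply]
  rw [Tinv_eq, ← geom_aux D Pn n, ← Finset.sum_apply, ← LinearMap.sum_apply]
  rw [show ((∑ m ∈ Finset.range (n + 1),
        (-(cwMap D ∘ₗ starMap (posPart Pn)) : Module.End (PowerSeries ℝ) (ℕ → B)) ^ m)
      ((LinearMap.id + cwMap D ∘ₗ starMap (posPart Pn) :
        (ℕ → B) →ₗ[PowerSeries ℝ] (ℕ → B)) u))
    = (((∑ m ∈ Finset.range (n + 1),
        (-(cwMap D ∘ₗ starMap (posPart Pn)) : Module.End (PowerSeries ℝ) (ℕ → B)) ^ m)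
        * (LinearMap.id + cwMap D ∘ₗ starMap (posPart Pn) :
          Module.End (PowerSeries ℝ) (ℕ → B))) u) from rfl]
  rw [T_as_ring, geom_sum_mul_neg]
  rw [LinearMap.sub_apply, Module.End.one_apply, Pi.sub_apply,
    negR_pow_vanish D Pn (n + 1) u n (by omega), sub_zero]

theorem part_iii (A : Submodule ℝ B) (Pn : ℕ → B →ₗ[ℝ] B)
    (hPpos : ∀ n, 0 < n → ∀ u : B, Pn n u ∈ A)
    (D : B →ₗ[ℝ] B) (hPD : ∀ a ∈ A, Pn 0 (D a) = a) :
    starMap Pn ∘ₗ (LinearMap.id - starMap (dGreen D Pn) ∘ₗ starMap (posPart Pn))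
      = cwMap (Pn 0) := by
  rw [← part_i A Pn hPpos D hPD, LinearMap.comp_assoc, TTinv, LinearMap.comp_id]

theorem part_ii (D : B →ₗ[ℝ] B) (Pn : ℕ → B →ₗ[ℝ] B) (u : ℕ → B) (n N : ℕ) (h : n ≤ N) :
    (∑ m ∈ Finset.range (N + 1),
      (((-(cwMap D ∘ₗ starMap (posPart Pn)) : Module.End (PowerSeries ℝ) (ℕ → B)) ^ m) u) n)
      = ((LinearMap.id - starMap (dGreen D Pn) ∘ₗ starMap (posPart Pn) :
          (ℕ → B) →ₗ[PowerSeries ℝ] (ℕ → B)) u) n := by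
  rw [Tinv_eq, ← geom_aux D Pn n u]
  exact (Finset.sum_subset (Finset.range_subset_range.mpr (by omega))
    (fun m _ hm => negR_pow_vanish D Pn m u n (by
      simp only [Finset.mem_range, not_lt] at hm; omega))).symm

/-- with `Q := Σ_{n≥1} λⁿ P_(n)`, `T_± := id + Δ_± ∘ Q` and
`T_±⁻¹ := id − Δ_⋆± ∘ Q`, the following operator identities hold on `B[[λ]]`:
(i) `P ∘ T_± = P_⋆`; (ii) the geometric series `Σ_{m≥0} (−Δ_± ∘ Q)^m` (which stabilizes
coefficientwise, since `Δ_± ∘ Q` has vanishing `λ⁰`-coefficient) equals `id − Δ_⋆± ∘ Q`, so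
`T_± ∘ T_±⁻¹ = T_±⁻¹ ∘ T_± = id`; (iii) `P_⋆ ∘ T_±⁻¹ = P`. -/
theorem statement_6
    (A : Submodule ℝ B)
    -- the family `P_(n)` (`P := P_(0)`), with `P(A) ⊆ A` and `P_(n) : B → A` for `n ≥ 1`
    (Pn : ℕ → B →ₗ[ℝ] B)
    (hPA : ∀ a ∈ A, Pn 0 a ∈ A)
    (hPpos : ∀ n, 0 < n → ∀ u : B, Pn n u ∈ A)
    -- the undeformed retarded/advanced Green's operators `Δ_±` (defined on `A`)
    (Dp Dm : B →ₗ[ℝ] B)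
    (hPDp : ∀ a ∈ A, Pn 0 (Dp a) = a) (hDpP : ∀ a ∈ A, Dp (Pn 0 a) = a)
    (hPDm : ∀ a ∈ A, Pn 0 (Dm a) = a) (hDmP : ∀ a ∈ A, Dm (Pn 0 a) = a)
 :
    -- (i) `P ∘ T_± = P_⋆`
    (cwMap (Pn 0) ∘ₗ (LinearMap.id + cwMap Dp ∘ₗ starMap (posPart Pn)) = starMap Pn) ∧
    (cwMap (Pn 0) ∘ₗ (LinearMap.id + cwMap Dm ∘ₗ starMap (posPart Pn)) = starMap Pn) ∧
    -- (ii) the geometric series `Σ_m (−Δ_± ∘ Q)^m` equals `id − Δ_⋆± ∘ Q` …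
    (∀ (u : ℕ → B) (n N : ℕ), n ≤ N →
      (∑ m ∈ Finset.range (N + 1),
        (((-(cwMap Dp ∘ₗ starMap (posPart Pn)) : Module.End (PowerSeries ℝ) (ℕ → B)) ^ m) u) n)
        = ((LinearMap.id - starMap (dGreen Dp Pn) ∘ₗ starMap (posPart Pn) :
            (ℕ → B) →ₗ[PowerSeries ℝ] (ℕ → B)) u) n) ∧
    (∀ (u : ℕ → B) (n N : ℕ), n ≤ N →
      (∑ m ∈ Finset.range (N + 1),
        (((-(cwMap Dm ∘ₗ starMap (posPart Pn)) : Module.End (PowerSeries ℝ) (ℕ → B)) ^ m) u) n)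
        = ((LinearMap.id - starMap (dGreen Dm Pn) ∘ₗ starMap (posPart Pn) :
            (ℕ → B) →ₗ[PowerSeries ℝ] (ℕ → B)) u) n) ∧
    -- … so `T_± ∘ T_±⁻¹ = T_±⁻¹ ∘ T_± = id`
    ((LinearMap.id + cwMap Dp ∘ₗ starMap (posPart Pn))
        ∘ₗ (LinearMap.id - starMap (dGreen Dp Pn) ∘ₗ starMap (posPart Pn)) = LinearMap.id) ∧
    ((LinearMap.id - starMap (dGreen Dp Pn) ∘ₗ starMap (posPart Pn))
        ∘ₗ (LinearMap.id + cwMap Dp ∘ₗ starMap (posPart Pn)) = LinearMap.id) ∧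
    ((LinearMap.id + cwMap Dm ∘ₗ starMap (posPart Pn))
        ∘ₗ (LinearMap.id - starMap (dGreen Dm Pn) ∘ₗ starMap (posPart Pn)) = LinearMap.id) ∧
    ((LinearMap.id - starMap (dGreen Dm Pn) ∘ₗ starMap (posPart Pn))
        ∘ₗ (LinearMap.id + cwMap Dm ∘ₗ starMap (posPart Pn)) = LinearMap.id) ∧
    -- (iii) `P_⋆ ∘ T_±⁻¹ = P`
    (starMap Pn ∘ₗ (LinearMap.id - starMap (dGreen Dp Pn) ∘ₗ starMap (posPart Pn))
        = cwMap (Pn 0)) ∧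
    (starMap Pn ∘ₗ (LinearMap.id - starMap (dGreen Dm Pn) ∘ₗ starMap (posPart Pn))
        = cwMap (Pn 0)) := by
  exact ⟨part_i A Pn hPpos Dp hPDp, part_i A Pn hPpos Dm hPDm,
    fun u n N h => part_ii Dp Pn u n N h, fun u n N h => part_ii Dm Pn u n N h,
    TTinv Dp Pn, TinvT Dp Pn, TTinv Dm Pn, TinvT Dm Pn,
    part_iii A Pn hPpos Dp hPDp, part_iii A Pn hPpos Dm hPDm⟩

end NCQFT
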